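/- If G₁ and G₂ are PFSA with identical structure (same state set Q, same transition function δ, same start state) and strictly positive morph functions Π̃₁, Π̃₂, then the measure p₁ ⊕ p₂ (where pᵢ = H(Gᵢ)) is encoded by the PFSA with the same structure and morph function Π̃(q,σ) = Π̃₁(q,σ)Π̃₂(q,σ) / ∑_{α∈Σ} Π̃₁(q,α)Π̃₂(q,α). -/
import Mathlib


/-- Auxiliary builder: construct a string measure from conditional ratios. -/
def buildAux {A : Type*} (r : List A → A → ℝ) : List A → List A → ℝ
  | _, [] => 1
  | pre, τ :: rest => r pre τ * buildAux r (pre ++ [τ]) rest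

/-- `build r x` is the product of the conditional ratios `r` along the prefixes of `x`. -/
def build {A : Type*} (r : List A → A → ℝ) : List A → ℝ := buildAux r []

/-- A restricted probability measure: strictly positive cylinder probabilities in (0,1],
with value 1 on the empty string and consistent one-symbol extensions. -/
def IsMeasPlus {A : Type*} [Fintype A] (p : List A → ℝ) : Prop :=
  p [] = 1 ∧ (∀ x, 0 < p x ∧ p x ≤ 1) ∧ ∀ x, (∑ τ : A, p (x ++ [τ])) = p x

/-- The abelian sum `p₁ ⊕ p₂`, defined by `(p₁⊕p₂)(ε) = 1` and
`(p₁⊕p₂)(xτ)/(p₁⊕p₂)(x) = p₁(xτ)p₂(xτ)/∑_α p₁(xα)p₂(xα)`. -/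
noncomputable def oplus {A : Type*} [Fintype A] (p₁ p₂ : List A → ℝ) : List A → ℝ :=
  build (fun x τ => p₁ (x ++ [τ]) * p₂ (x ++ [τ]) / ∑ α : A, p₁ (x ++ [α]) * p₂ (x ++ [α]))

/-- Symbolic white noise: `i∘(x) = (1/|Σ|)^{|x|}`. -/
noncomputable def whiteNoise (A : Type*) [Fintype A] : List A → ℝ :=
  fun x => (1 / (Fintype.card A : ℝ)) ^ x.length

/-- The ⊕-inverse `−p`, defined by `(−p)(ε) = 1` and
`(−p)(xτ)/(−p)(x) = p(xτ)⁻¹/∑_α p(xα)⁻¹`. -/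
noncomputable def oneg {A : Type*} [Fintype A] (p : List A → ℝ) : List A → ℝ :=
  build (fun x τ => (p (x ++ [τ]))⁻¹ / ∑ α : A, (p (x ++ [α]))⁻¹)

/-- A PFSA over state set `Q` and alphabet `A`: transition map, start state, morph function. -/
structure PFSA (Q A : Type*) where
  δ : Q → A → Q
  q0 : Q
  π : Q → A → ℝ

/-- Validity: the morph function is strictly positive and each row sums to 1. -/
def PFSA.Valid {Q A : Type*} [Fintype A] (G : PFSA Q A) : Prop :=
  (∀ q σ, 0 < G.π q σ) ∧ ∀ q, (∑ σ : A, G.π q σ) = 1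

/-- The probability of generating string `x` starting from state `q`. -/
def HmeasAux {Q A : Type*} (G : PFSA Q A) : Q → List A → ℝ
  | _, [] => 1
  | q, σ :: rest => G.π q σ * HmeasAux G (G.δ q σ) rest

/-- The string-probability measure `H(G)` induced by the PFSA `G`:
`p(σ₁⋯σ_r) = ∏_k Π̃(δ*(q₀,σ₁⋯σ_k), σ_{k+1})`. -/
def Hmeas {Q A : Type*} (G : PFSA Q A) : List A → ℝ := HmeasAux G G.q0

/-- Extended transition function. -/
def dstar {Q A : Type*} (δ : Q → A → Q) : Q → List A → Q
  | q, [] => q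
  | q, σ :: rest => dstar δ (δ q σ) rest

theorem dstar_snoc {Q A : Type*} (δ : Q → A → Q) (q : Q) (x : List A) (τ : A) :
    dstar δ q (x ++ [τ]) = δ (dstar δ q x) τ := by
  induction x generalizing q with
  | nil => rfl
  | cons a rest ih => simp [dstar, ih]

theorem HmeasAux_snoc {Q A : Type*} (G : PFSA Q A) (q : Q) (x : List A) (τ : A) :
    HmeasAux G q (x ++ [τ]) = HmeasAux G q x * G.π (dstar G.δ q x) τ := by
  induction x generalizing q with
  | nil => simp [HmeasAux, dstar]
  | cons a rest ih => simp [HmeasAux, dstar, ih, mul_assoc]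

theorem HmeasAux_pos {Q A : Type*} (G : PFSA Q A) (hpos : ∀ q σ, 0 < G.π q σ)
    (q : Q) (x : List A) : 0 < HmeasAux G q x := by
  induction x generalizing q with
  | nil => simp [HmeasAux]
  | cons a rest ih => exact mul_pos (hpos q a) (ih _)

theorem buildAux_state {Q A : Type*} (G : PFSA Q A) (x pre : List A) :
    buildAux (fun y τ => G.π (dstar G.δ G.q0 y) τ) pre x = HmeasAux G (dstar G.δ G.q0 pre) x := by
  induction x generalizing pre with
  | nil => rfl
  | cons a rest ih =>
    simp only [buildAux, HmeasAux, ih (pre ++ [a]), dstar_snoc]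

theorem build_congr {A : Type*} (r₁ r₂ : List A → A → ℝ) (h : ∀ x τ, r₁ x τ = r₂ x τ) :
    build r₁ = build r₂ := by
  have : r₁ = r₂ := funext fun x => funext (h x)
  rw [this]

/-- for PFSA with identical structure, the measure `H(G₁) ⊕ H(G₂)` is encoded
by the PFSA with the same structure and morph function
`Π̃(q,σ) = Π̃₁(q,σ)Π̃₂(q,σ)/∑_α Π̃₁(q,α)Π̃₂(q,α)`. -/
theorem pfsa_sum_identical_structure {Q A : Type*} [Fintype A] [Nonempty A]
    (δ : Q → A → Q) (q0 : Q) (π₁ π₂ : Q → A → ℝ)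
    (h₁ : (PFSA.mk δ q0 π₁).Valid) (h₂ : (PFSA.mk δ q0 π₂).Valid) :
    Hmeas (PFSA.mk δ q0 (fun q σ => π₁ q σ * π₂ q σ / ∑ α : A, π₁ q α * π₂ q α)) =
      oplus (Hmeas (PFSA.mk δ q0 π₁)) (Hmeas (PFSA.mk δ q0 π₂)) := by
  set Gc : PFSA Q A := PFSA.mk δ q0 (fun q σ => π₁ q σ * π₂ q σ / ∑ α : A, π₁ q α * π₂ q α)
  set G₁ : PFSA Q A := PFSA.mk δ q0 π₁
  set G₂ : PFSA Q A := PFSA.mk δ q0 π₂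
  have key : oplus (Hmeas G₁) (Hmeas G₂) =
      build (fun y τ => Gc.π (dstar Gc.δ Gc.q0 y) τ) := by
    unfold oplus
    apply build_congr
    intro x τ
    have h1 : ∀ α, Hmeas G₁ (x ++ [α]) = HmeasAux G₁ q0 x * π₁ (dstar δ q0 x) α := fun α =>
      HmeasAux_snoc G₁ q0 x α
    have h2 : ∀ α, Hmeas G₂ (x ++ [α]) = HmeasAux G₂ q0 x * π₂ (dstar δ q0 x) α := fun α =>
      HmeasAux_snoc G₂ q0 x α
    have hc : (0:ℝ) < HmeasAux G₁ q0 x * HmeasAux G₂ q0 x :=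
      mul_pos (HmeasAux_pos G₁ h₁.1 q0 x) (HmeasAux_pos G₂ h₂.1 q0 x)
    simp only [h1, h2]
    have : ∀ α, HmeasAux G₁ q0 x * π₁ (dstar δ q0 x) α * (HmeasAux G₂ q0 x * π₂ (dstar δ q0 x) α)
        = (HmeasAux G₁ q0 x * HmeasAux G₂ q0 x) * (π₁ (dstar δ q0 x) α * π₂ (dstar δ q0 x) α) :=
      fun α => by ring
    simp only [this, ← Finset.mul_sum]
    rw [mul_div_mul_left _ _ (ne_of_gt hc)]
  rw [key, Hmeas]
  funext x
  rw [build, buildAux_state Gc x []]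
  rfl
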